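/- Let Ω ⊆ ℝ³ be a bounded open set and b a boundary point of Ω satisfying the exterior Lipschitz graph condition at b. Then ∫_{ℝ³ ∖ closure(Ω)} ‖z − x‖⁻⁶ dz tends to +∞ as x tends to b within Ω (i.e., the map x ↦ ∫_{ℝ³ ∖ closure(Ω)} ‖z − x‖⁻⁶ dz tends to infinity along the filter of neighborhoods of b restricted to Ω). (Claim (B.2) in the proof of Proposition B.) -/

import Mathlib

/-!
Near `b` the exterior of `Ω` contains, at every scale `d`, a ball of radius `c d` centred within
distance `d` of `b`: the cone above the Lipschitz graph is wide enough. For `x ∈ Ω` with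
`‖x - b‖ = d` this ball lies within `(2 + c) d` of `x` and has volume `≍ d³`, so the integral is
`≳ d³ · d⁻⁶ → ∞`.
-/

open MeasureTheory Filter
open scoped ENNReal Topology

noncomputable section

/-- The identification of `ℝ² × ℝ` with `ℝ³`: `(s, t) ↦ (s₁, s₂, t)`. -/
def emb (s : EuclideanSpace ℝ (Fin 2)) (t : ℝ) : EuclideanSpace ℝ (Fin 3) :=
  (EuclideanSpace.equiv (Fin 3) ℝ).symm ![s 0, s 1, t]

/-- The exterior Lipschitz graph condition at a boundary point `b` of `Ω ⊆ ℝ³`. -/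
def ExtLipschitzGraphCond (Ω : Set (EuclideanSpace ℝ (Fin 3)))
    (b : EuclideanSpace ℝ (Fin 3)) : Prop :=
  ∃ δ > (0 : ℝ), ∃ A : EuclideanSpace ℝ (Fin 3) ≃ₗᵢ[ℝ] EuclideanSpace ℝ (Fin 3),
    ∃ φ : EuclideanSpace ℝ (Fin 2) → ℝ, ∃ L : NNReal, LipschitzWith L φ ∧ φ 0 = 0 ∧
      ∀ (s : EuclideanSpace ℝ (Fin 2)) (t : ℝ), φ s < t → ‖s‖ ^ 2 + t ^ 2 < δ ^ 2 →
        b + A (emb s t) ∈ (closure Ω)ᶜ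

lemma norm_emb_sq (s : EuclideanSpace ℝ (Fin 2)) (t : ℝ) :
    ‖emb s t‖ ^ 2 = ‖s‖ ^ 2 + t ^ 2 := by
  rw [EuclideanSpace.norm_eq, EuclideanSpace.norm_eq,
    Real.sq_sqrt (by positivity), Real.sq_sqrt (by positivity)]
  simp [emb, Fin.sum_univ_three, Fin.sum_univ_two, sq_abs]

lemma norm_emb_zero (t : ℝ) : ‖emb 0 t‖ = |t| := by
  rw [← Real.sqrt_sq (norm_nonneg _), norm_emb_sq, norm_zero, zero_pow two_ne_zero, zero_add,
    Real.sqrt_sq_eq_abs]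

lemma emb_sub_emb (s s' : EuclideanSpace ℝ (Fin 2)) (t t' : ℝ) :
    emb s t - emb s' t' = emb (s - s') (t - t') := by
  ext i; fin_cases i <;> simp [emb]

lemma exists_emb_eq (w : EuclideanSpace ℝ (Fin 3)) : ∃ s t, emb s t = w :=
  ⟨(EuclideanSpace.equiv (Fin 2) ℝ).symm ![w 0, w 1], w 2, by ext i; fin_cases i <;> simp [emb]⟩

lemma LipschitzWith.lt_of_sq_add_sq_lt {E : Type*} [SeminormedAddCommGroup E] {φ : E → ℝ}
    {L : NNReal} (hφ : LipschitzWith L φ) (hφ0 : φ 0 = 0) {s : E} {t d : ℝ} (hd : 0 < d)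
    (h : ‖s‖ ^ 2 + (t - d) ^ 2 < (d / (2 * (L + 1))) ^ 2) : φ s < t := by
  set r := d / (2 * (L + 1)) with hr_def
  have hr : 0 < r := by positivity
  have hLr : (L : ℝ) * r + r = d / 2 := by rw [hr_def]; field_simp
  have hs : ‖s‖ < r := lt_of_pow_lt_pow_left₀ 2 hr.le (by nlinarith [sq_nonneg (t - d)])
  have ht : d - r < t := by nlinarith [sq_nonneg ‖s‖, sq_nonneg (t - d + r)]
  have hφs : φ s ≤ L * ‖s‖ := by
    simpa [hφ0, Real.dist_eq] using (le_abs_self _).trans (hφ.dist_le_mul s 0)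
  nlinarith [mul_le_mul_of_nonneg_left hs.le L.coe_nonneg]

def CorkscrewCondition {E : Type*} [SeminormedAddCommGroup E] (U : Set E) (b : E) : Prop :=
  ∃ c > (0 : ℝ), ∀ᶠ d in 𝓝[>] (0 : ℝ), ∃ q, ‖q - b‖ ≤ d ∧ Metric.ball q (c * d) ⊆ U

/-- The ball of radius `d / (2 (L + 1))` about `b + A (0, d)` lies in the exterior cone above the
Lipschitz graph. -/
theorem ExtLipschitzGraphCond.corkscrewCondition {Ω : Set (EuclideanSpace ℝ (Fin 3))}
    {b : EuclideanSpace ℝ (Fin 3)} (h : ExtLipschitzGraphCond Ω b) :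
    CorkscrewCondition (closure Ω)ᶜ b := by
  obtain ⟨δ, hδ, A, φ, L, hφ, hφ0, hcone⟩ := h
  have hc : (0 : ℝ) < 1 / (2 * (L + 1)) := by positivity
  refine ⟨_, hc, ?_⟩
  filter_upwards [Ioo_mem_nhdsGT (half_pos hδ)] with d ⟨hd, hdδ⟩
  refine ⟨b + A (emb 0 d), by simp [norm_emb_zero, abs_of_pos hd], fun z hz_ball => ?_⟩
  obtain ⟨s, t, hst⟩ := exists_emb_eq (A.symm (z - b))
  have hz : z = b + A (emb s t) := by simp [hst]
  have hdist : ‖emb s t - emb 0 d‖ < d / (2 * (L + 1)) := by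
    rw [hst, ← A.norm_map, map_sub, A.apply_symm_apply, sub_sub, ← dist_eq_norm,
      div_eq_inv_mul, ← one_div]
    exact hz_ball
  have hr : d / (2 * (L + 1)) ≤ d := div_le_self hd.le (by linarith [L.coe_nonneg])
  rw [emb_sub_emb, sub_zero] at hdist
  rw [hz]
  refine hcone s t (hφ.lt_of_sq_add_sq_lt hφ0 hd ?_) ?_
  · rw [← norm_emb_sq]
    exact pow_lt_pow_left₀ hdist (norm_nonneg _) two_ne_zero
  · have hnorm : ‖emb s t‖ < δ := calc
      ‖emb s t‖ ≤ ‖emb 0 d‖ + ‖emb s t - emb 0 d‖ := norm_le_insert' _ _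
      _ < δ := by rw [emb_sub_emb, sub_zero, norm_emb_zero, abs_of_pos hd]; linarith
    rw [← norm_emb_sq]
    exact pow_lt_pow_left₀ hnorm (norm_nonneg _) two_ne_zero

section Singularity

variable {E : Type*} [NormedAddCommGroup E] [MeasurableSpace E] [OpensMeasurableSpace E]

lemma measure_ball_mul_le_setLIntegral_inv_norm_pow (μ : Measure E) {U : Set E} {x q : E}
    {r R : ℝ} (p : ℕ) (hU : Metric.ball q r ⊆ U) (hx : x ∉ U) (hR : ‖q - x‖ + r ≤ R) :
    μ (Metric.ball q r) * ENNReal.ofReal (1 / R ^ p) ≤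
      ∫⁻ z in U, ENNReal.ofReal (1 / ‖z - x‖ ^ p) ∂μ := calc
  μ (Metric.ball q r) * ENNReal.ofReal (1 / R ^ p)
      = ∫⁻ _ in Metric.ball q r, ENNReal.ofReal (1 / R ^ p) ∂μ := by
        rw [setLIntegral_const, mul_comm]
  _ ≤ ∫⁻ z in Metric.ball q r, ENNReal.ofReal (1 / ‖z - x‖ ^ p) ∂μ := by
        refine setLIntegral_mono' measurableSet_ball fun z hz => ENNReal.ofReal_le_ofReal ?_
        have hzx : 0 < ‖z - x‖ := norm_pos_iff.2 (sub_ne_zero.2 fun h => hx (h ▸ hU hz))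
        have hzR : ‖z - x‖ ≤ R := calc
          ‖z - x‖ ≤ ‖z - q‖ + ‖q - x‖ := norm_sub_le_norm_sub_add_norm_sub _ _ _
          _ ≤ R := by linarith [mem_ball_iff_norm.1 hz]
        exact one_div_le_one_div_of_le (by positivity) (pow_le_pow_left₀ hzx.le hzR p)
  _ ≤ ∫⁻ z in U, ENNReal.ofReal (1 / ‖z - x‖ ^ p) ∂μ := lintegral_mono_set hU

lemma tendsto_pow_div_pow_nhdsGT_zero {k p : ℕ} (h : k < p) :
    Tendsto (fun d : ℝ => d ^ k / d ^ p) (𝓝[>] 0) atTop := by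
  have hinv :=
    (tendsto_pow_atTop (Nat.sub_ne_zero_of_lt h)).comp (tendsto_inv_nhdsGT_zero (𝕜 := ℝ))
  refine hinv.congr' ?_
  filter_upwards [self_mem_nhdsWithin] with d (hd : 0 < d)
  rw [Function.comp_apply, inv_pow, pow_sub₀ d hd.ne' h.le]
  field_simp

variable [NormedSpace ℝ E] [FiniteDimensional ℝ E] [BorelSpace E] [Nontrivial E]

theorem CorkscrewCondition.tendsto_setLIntegral_inv_norm_pow (μ : Measure E)
    [μ.IsAddHaarMeasure] {U s : Set E} {b : E} (hU : CorkscrewCondition U b) (hs : s ⊆ Uᶜ)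
    (hb : b ∉ s) {p : ℕ} (hp : Module.finrank ℝ E < p) :
    Tendsto (fun x => ∫⁻ z in U, ENNReal.ofReal (1 / ‖z - x‖ ^ p) ∂μ) (𝓝[s] b) (𝓝 ⊤) := by
  obtain ⟨c, hc, hball⟩ := hU
  set n := Module.finrank ℝ E
  set g : ℝ → ℝ≥0∞ := fun d =>
    ENNReal.ofReal ((c * d) ^ n) * μ (Metric.ball 0 1) * ENNReal.ofReal (1 / ((2 + c) * d) ^ p)
  have hg : Tendsto g (𝓝[>] 0) (𝓝 ⊤) := by
    have hreal : Tendsto (fun d : ℝ => ENNReal.ofReal (c ^ n / (2 + c) ^ p * (d ^ n / d ^ p)))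
        (𝓝[>] 0) (𝓝 ⊤) :=
      ENNReal.tendsto_ofReal_atTop.comp
        ((tendsto_pow_div_pow_nhdsGT_zero hp).const_mul_atTop (by positivity))
    have hB : μ (Metric.ball 0 1) ≠ 0 := (Metric.measure_ball_pos μ _ one_pos).ne'
    rw [← ENNReal.mul_top hB]
    refine (ENNReal.Tendsto.const_mul hreal (Or.inl ENNReal.top_ne_zero)).congr' ?_
    filter_upwards [self_mem_nhdsWithin] with d (hd : 0 < d)
    simp only [g]
    rw [mul_comm (ENNReal.ofReal ((c * d) ^ n)), mul_assoc, ← ENNReal.ofReal_mul (by positivity)]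
    congr 2
    rw [mul_pow, mul_pow]
    field_simp
  have hnorm : Tendsto (fun x => ‖x - b‖) (𝓝[s] b) (𝓝[>] 0) :=
    (tendsto_norm_sub_self_nhdsNE b).mono_left
      (nhdsWithin_mono _ fun x hx => ne_of_mem_of_not_mem hx hb)
  refine tendsto_nhds_top_mono (hg.comp hnorm) ?_
  filter_upwards [hnorm.eventually hball, hnorm.eventually self_mem_nhdsWithin,
    self_mem_nhdsWithin] with x ⟨q, hqb, hq⟩ (hd : 0 < ‖x - b‖) hx
  calc g ‖x - b‖
      = μ (Metric.ball q (c * ‖x - b‖)) * ENNReal.ofReal (1 / ((2 + c) * ‖x - b‖) ^ p) := by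
        rw [Measure.addHaar_ball μ q (by positivity)]
  _ ≤ _ := by
        refine measure_ball_mul_le_setLIntegral_inv_norm_pow μ p hq (hs hx) ?_
        linarith [norm_sub_le_norm_sub_add_norm_sub q b x, norm_sub_rev b x]

end Singularity

theorem claim_B2_general (Ω : Set (EuclideanSpace ℝ (Fin 3))) (hΩo : IsOpen Ω)
    (b : EuclideanSpace ℝ (Fin 3)) (hb : b ∈ frontier Ω)
    (hcond : ExtLipschitzGraphCond Ω b) :
    Filter.Tendsto
      (fun x : EuclideanSpace ℝ (Fin 3) =>
        ∫⁻ z in (closure Ω)ᶜ, ENNReal.ofReal (1 / ‖z - x‖ ^ 6))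
      (nhdsWithin b Ω) (nhds ⊤) := by
  have hbΩ : b ∉ Ω := (hΩo.frontier_eq ▸ hb).2
  have hΩ : Ω ⊆ (closure Ω)ᶜᶜ := by simpa using subset_closure
  exact hcond.corkscrewCondition.tendsto_setLIntegral_inv_norm_pow volume hΩ hbΩ (by simp)

/-- **Claim (B.2) in the proof of Proposition B.** If `Ω ⊆ ℝ³` is a bounded open set and
`b ∈ ∂Ω` satisfies the exterior Lipschitz graph condition, then
`∫_{ℝ³ ∖ closure Ω} ‖z − x‖⁻⁶ dz → +∞` as `x → b` within `Ω`. -/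
theorem claim_B2 (Ω : Set (EuclideanSpace ℝ (Fin 3))) (hΩo : IsOpen Ω)
    (hΩb : Bornology.IsBounded Ω) (b : EuclideanSpace ℝ (Fin 3)) (hb : b ∈ frontier Ω)
    (hcond : ExtLipschitzGraphCond Ω b) :
    Filter.Tendsto
      (fun x : EuclideanSpace ℝ (Fin 3) =>
        ∫⁻ z in (closure Ω)ᶜ, ENNReal.ofReal (1 / ‖z - x‖ ^ 6))
      (nhdsWithin b Ω) (nhds ⊤) :=
  claim_B2_general Ω hΩo b hb hcond
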